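/- Fix 0 < q ≤ 1 and write [n]_q = 1 + q + q² + … + q^{n−1} for the q-integer. For every natural number m, the limit as N → ∞ of ⟨e_N, ((a_q + a_q†)/√(2·[N]_q))^(2m) e_N⟩ equals (1/2^m)·(2m choose m), i.e. the arcsine law also emerges as the high-energy limit on the q-Fock space. -/

import Mathlib

open MeasureTheory Filter

noncomputable def e (n : ℕ) : ℕ →₀ ℝ := Finsupp.single n 1

noncomputable def innerF (f g : ℕ →₀ ℝ) : ℝ := f.sum fun n c => c * g n

/-- The `q`-integer `[n]_q = 1 + q + q² + … + q^{n−1}`. -/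
noncomputable def qInt (q : ℝ) (n : ℕ) : ℝ := ∑ i ∈ Finset.range n, q ^ i

/-- The `q`-annihilation operator: `a_q e_0 = 0`, `a_q e_n = √([n]_q) e_{n−1}`. -/
noncomputable def annQ (q : ℝ) : (ℕ →₀ ℝ) →ₗ[ℝ] (ℕ →₀ ℝ) :=
  Finsupp.lsum ℝ fun n => Real.sqrt (qInt q n) • (Finsupp.lsingle (n - 1) : ℝ →ₗ[ℝ] (ℕ →₀ ℝ))

/-- The `q`-creation operator: `a_q† e_n = √([n+1]_q) e_{n+1}`. -/
noncomputable def creQ (q : ℝ) : (ℕ →₀ ℝ) →ₗ[ℝ] (ℕ →₀ ℝ) :=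
  Finsupp.lsum ℝ fun n => Real.sqrt (qInt q (n + 1)) • (Finsupp.lsingle (n + 1) : ℝ →ₗ[ℝ] (ℕ →₀ ℝ))

/-! Write `T_N = (a_q + a_q†) / √(2 [N]_q)`. Since `q^N / [N]_q ≤ 1 / N` for `0 < q ≤ 1`, and
`[N + a]_q = [N]_q + q^N [a]_q`, the ratio `[N + k]_q / [N]_q` tends to `1` for every fixed shift
`k`. So near the `N`-th level `T_N` acts like `(S + S⁻¹) / √2`, with `S` the shift, and the
coefficient of `e_{N+k}` in `T_N^j e_N` tends to `2^{-j/2}` times the number of `±1` walks of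
length `j` from `0` to `k`, i.e. the coefficient of `T^k` in `(T + T⁻¹)^j`. For `j = 2m`, `k = 0`
this is `(2m choose m)`. -/

open LaurentPolynomial

lemma coeff_T_mul {R : Type*} [Semiring R] (p : R[T;T⁻¹]) (n k : ℤ) :
    (T n * p).coeff k = p.coeff (k - n) := by
  rw [T, AddMonoidAlgebra.coeff_single_mul_apply, one_mul, neg_add_eq_sub]

lemma coeff_toLaurent_natCast {R : Type*} [Semiring R] (f : Polynomial R) (n : ℕ) :
    (Polynomial.toLaurent f).coeff n = f.coeff n :=
  Finsupp.mapDomain_apply Nat.castEmbedding.injective _ n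

noncomputable def walkCount (j : ℕ) (k : ℤ) : ℝ := ((T 1 + T (-1) : ℝ[T;T⁻¹]) ^ j).coeff k

lemma walkCount_zero (k : ℤ) : walkCount 0 k = if k = 0 then 1 else 0 := by
  rw [walkCount, pow_zero, ← T_zero, T_apply]
  simp only [eq_comm]

lemma walkCount_succ (j : ℕ) (k : ℤ) :
    walkCount (j + 1) k = walkCount j (k + 1) + walkCount j (k - 1) := by
  rw [walkCount, pow_succ', add_mul, AddMonoidAlgebra.coeff_add, Finsupp.add_apply, coeff_T_mul,
    coeff_T_mul, sub_neg_eq_add, add_comm]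
  rfl

lemma walkCount_two_mul_zero (m : ℕ) : walkCount (2 * m) 0 = (2 * m).choose m := by
  have hfactor : (T 1 + T (-1) : ℝ[T;T⁻¹]) =
      T (-1) * Polynomial.toLaurent (Polynomial.expand ℝ 2 (Polynomial.X + 1)) := by
    rw [map_add, Polynomial.expand_X, map_one, map_add, map_pow, Polynomial.toLaurent_X, map_one,
      mul_add, mul_one, T_pow, ← T_add]
    norm_num [add_comm]
  rw [walkCount, hfactor, mul_pow, T_pow, ← map_pow, ← map_pow, coeff_T_mul,
    show (0 : ℤ) - (2 * m : ℕ) * -1 = (2 * m : ℕ) by ring, coeff_toLaurent_natCast,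
    Polynomial.coeff_expand two_pos, if_pos (dvd_mul_right 2 m),
    Nat.mul_div_cancel_left m two_pos, Polynomial.coeff_X_add_one_pow]

theorem tendsto_pow_apply_e_of_tendsto_weight (A : ℕ → (ℕ →₀ ℝ) →ₗ[ℝ] (ℕ →₀ ℝ))
    (w : ℕ → ℕ → ℝ) {c : ℝ}
    (hA : ∀ N f n, A N f n = w N (n + 1) * f (n + 1) + w N n * f (n - 1))
    (hw : ∀ k : ℤ, Tendsto (fun N : ℕ => w N (N + k).toNat) atTop (nhds c)) (j : ℕ) (k : ℤ) :
    Tendsto (fun N => (A N ^ j) (e N) (N + k).toNat) atTop (nhds (c ^ j * walkCount j k)) := by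
  induction j generalizing k with
  | zero =>
    refine tendsto_const_nhds.congr' ?_
    filter_upwards [eventually_ge_atTop k.natAbs] with N hN
    rw [pow_zero, one_mul, walkCount_zero, pow_zero, Module.End.one_apply, e, Finsupp.single_apply]
    exact if_congr (by omega) rfl rfl
  | succ j ih =>
    have hlim := ((hw (k + 1)).mul (ih (k + 1))).add ((hw k).mul (ih (k - 1)))
    rw [← mul_add, ← mul_add, ← mul_assoc, ← pow_succ', ← walkCount_succ] at hlim
    refine hlim.congr' ?_
    filter_upwards [eventually_ge_atTop (k.natAbs + 1)] with N hN
    rw [pow_succ', Module.End.mul_apply, hA,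
      show ((N : ℤ) + k).toNat + 1 = ((N : ℤ) + (k + 1)).toNat by omega,
      show ((N : ℤ) + k).toNat - 1 = ((N : ℤ) + (k - 1)).toNat by omega]

section qInt

variable {q : ℝ}

lemma qInt_zero : qInt q 0 = 0 := Finset.sum_range_zero _

lemma qInt_nonneg (hq : 0 ≤ q) (n : ℕ) : 0 ≤ qInt q n :=
  Finset.sum_nonneg fun i _ => pow_nonneg hq i

lemma qInt_pos (hq : 0 < q) {n : ℕ} (hn : 0 < n) : 0 < qInt q n :=
  Finset.sum_pos (fun i _ => pow_pos hq i) (Finset.nonempty_range_iff.mpr hn.ne')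

lemma qInt_add (n a : ℕ) : qInt q (n + a) = qInt q n + q ^ n * qInt q a := by
  simp only [qInt, Finset.sum_range_add, Finset.mul_sum, pow_add]

lemma natCast_mul_pow_le_qInt (hq0 : 0 ≤ q) (hq1 : q ≤ 1) (n : ℕ) : n * q ^ n ≤ qInt q n :=
  calc (n : ℝ) * q ^ n = ∑ _i ∈ Finset.range n, q ^ n := by simp
    _ ≤ qInt q n := Finset.sum_le_sum fun i hi =>
      pow_le_pow_of_le_one hq0 hq1 (Finset.mem_range.mp hi).le

lemma tendsto_pow_div_qInt (hq0 : 0 < q) (hq1 : q ≤ 1) :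
    Tendsto (fun N : ℕ => q ^ N / qInt q N) atTop (nhds 0) := by
  refine squeeze_zero'
    (Eventually.of_forall fun N => div_nonneg (pow_nonneg hq0.le N) (qInt_nonneg hq0.le N)) ?_
    tendsto_one_div_atTop_nhds_zero_nat
  filter_upwards [eventually_gt_atTop 0] with N hN
  rw [div_le_div_iff₀ (qInt_pos hq0 hN) (by positivity), one_mul, mul_comm]
  exact natCast_mul_pow_le_qInt hq0.le hq1 N

lemma tendsto_qInt_add_div_qInt (hq0 : 0 < q) (hq1 : q ≤ 1) (a : ℕ) :
    Tendsto (fun N : ℕ => qInt q (N + a) / qInt q N) atTop (nhds 1) := by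
  have hlim := ((tendsto_pow_div_qInt hq0 hq1).const_mul (qInt q a)).const_add 1
  rw [mul_zero, add_zero] at hlim
  refine hlim.congr' ?_
  filter_upwards [eventually_gt_atTop 0] with N hN
  rw [qInt_add, add_div, div_self (qInt_pos hq0 hN).ne', mul_comm (q ^ N), mul_div_assoc]

lemma tendsto_qInt_toNat_add_div_qInt (hq0 : 0 < q) (hq1 : q ≤ 1) (k : ℤ) :
    Tendsto (fun N : ℕ => qInt q (N + k).toNat / qInt q N) atTop (nhds 1) := by
  have hlim := ((tendsto_qInt_add_div_qInt hq0 hq1 (k + k.natAbs).toNat).div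
    (tendsto_qInt_add_div_qInt hq0 hq1 k.natAbs) one_ne_zero).comp
    (tendsto_sub_atTop_nat k.natAbs)
  rw [div_one] at hlim
  refine hlim.congr' ?_
  filter_upwards [eventually_gt_atTop k.natAbs] with N hN
  rw [Function.comp_apply, Pi.div_apply, div_div_div_cancel_right₀ (qInt_pos hq0 (by omega)).ne',
    show N - k.natAbs + (k + k.natAbs).toNat = ((N : ℤ) + k).toNat by omega,
    show N - k.natAbs + k.natAbs = N by omega]

lemma tendsto_inv_sqrt_two_mul_qInt_mul_sqrt_qInt (hq0 : 0 < q) (hq1 : q ≤ 1) (k : ℤ) :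
    Tendsto (fun N : ℕ => (√(2 * qInt q N))⁻¹ * √(qInt q (N + k).toNat)) atTop
      (nhds (√2)⁻¹) := by
  have hlim := ((Real.continuous_sqrt.tendsto 1).comp
    (tendsto_qInt_toNat_add_div_qInt hq0 hq1 k)).const_mul (√2)⁻¹
  rw [Real.sqrt_one, mul_one] at hlim
  refine hlim.congr fun N => ?_
  rw [Function.comp_apply, Real.sqrt_div' _ (qInt_nonneg hq0.le N), Real.sqrt_mul zero_le_two,
    mul_inv]
  ring

end qInt

lemma innerF_e_left (N : ℕ) (f : ℕ →₀ ℝ) : innerF (e N) f = f N := by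
  rw [innerF, e, Finsupp.sum_single_index (zero_mul _), one_mul]

lemma annQ_apply (q : ℝ) (f : ℕ →₀ ℝ) (n : ℕ) :
    annQ q f n = √(qInt q (n + 1)) * f (n + 1) := by
  induction f using Finsupp.induction_linear with
  | zero => simp
  | add f g hf hg => simp [hf, hg, mul_add]
  | single a b =>
    rcases a with _ | a
    · simp [annQ, qInt_zero]
    · rcases eq_or_ne a n with rfl | h <;> simp [annQ, mul_comm, *]

lemma creQ_apply (q : ℝ) (f : ℕ →₀ ℝ) (n : ℕ) :
    creQ q f n = √(qInt q n) * f (n - 1) := by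
  induction f using Finsupp.induction_linear with
  | zero => simp
  | add f g hf hg => simp [hf, hg, mul_add]
  | single a b =>
    rcases n with _ | n
    · simp [creQ, qInt_zero]
    · rcases eq_or_ne a n with rfl | h <;> simp [creQ, mul_comm, *]

/-- On the `q`-Fock space (`0 < q ≤ 1`), the even moments of the rescaled
position in the `N`-th number state converge to the even moments of the
normalized arcsine law. -/
theorem qFock_arcsine_even_moments_limit (q : ℝ) (hq0 : 0 < q) (hq1 : q ≤ 1) (m : ℕ) :
    Tendsto
      (fun N : ℕ =>
        innerF (e N)
          ((((Real.sqrt (2 * qInt q N))⁻¹ • (annQ q + creQ q)) ^ (2 * m)) (e N)))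
      atTop (nhds ((Nat.choose (2 * m) m : ℝ) / 2 ^ m)) := by
  have hlim := tendsto_pow_apply_e_of_tendsto_weight
    (fun N => (√(2 * qInt q N))⁻¹ • (annQ q + creQ q))
    (fun N n => (√(2 * qInt q N))⁻¹ * √(qInt q n))
    (fun N f n => by
      simp only [LinearMap.smul_apply, LinearMap.add_apply, Finsupp.smul_apply, Finsupp.add_apply,
        annQ_apply, creQ_apply, smul_eq_mul]
      ring)
    (tendsto_inv_sqrt_two_mul_qInt_mul_sqrt_qInt hq0 hq1) (2 * m) 0
  have hmoment : ((√2)⁻¹) ^ (2 * m) * walkCount (2 * m) 0 = (2 * m).choose m / 2 ^ m := by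
    rw [walkCount_two_mul_zero, pow_mul, inv_pow, Real.sq_sqrt zero_le_two, inv_pow,
      inv_mul_eq_div]
  simpa only [innerF_e_left, add_zero, Int.toNat_natCast, hmoment] using hlim
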